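/- (Flagged Jacobi–Trudi identity, symplectic case.) Let n ≥ 1, let R be a commutative ring, let x_1, …, x_n be invertible elements of R with x̄_i := x_i^{−1}, let a = (a_1, a_2, …) be a sequence in R, and let λ = (λ_1 ≥ … ≥ λ_n ≥ 0) be a partition with at most n parts. Then det_{1≤i,j≤n} ( x_i·(x_i|a)^{λ_j+n−j} − x̄_i·(x̄_i|a)^{λ_j+n−j} ) = ∏_{i=1}^n (x_i − x̄_i) · ∏_{1≤i<j≤n}(x_i + x̄_i − x_j − x̄_j) · det_{1≤i,j≤n} ( h^{sp}_{λ_j−j+i}(x^{(i)}, x̄^{(i)}|a) ), where x^{(i)} := (x_i, …, x_n) and x̄^{(i)} := (x̄_i, …, x̄_n). -/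

import Mathlib

open Finset

noncomputable def geom {R : Type*} [CommRing R] (x : R) : PowerSeries R :=
  PowerSeries.mk fun k => x ^ k

noncomputable def lin {R : Type*} [CommRing R] (a : R) : PowerSeries R :=
  1 + PowerSeries.C a * PowerSeries.X

noncomputable def facpow {R : Type*} [CommRing R] (x : R) (a : ℕ → R) (m : ℕ) : R :=
  ∏ j ∈ Finset.range m, (x + a (j + 1))

noncomputable def hgl {R : Type*} [CommRing R] {n : ℕ} (x : Fin n → R) (a : ℕ → R) (m : ℤ) : R :=
  if 0 ≤ m then
    PowerSeries.coeff m.toNat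
      ((∏ i, geom (x i)) * ∏ j ∈ Finset.range (n + m.toNat - 1), lin (a (j + 1)))
  else 0

noncomputable def hsp {R : Type*} [CommRing R] {n : ℕ} (x : Fin n → Rˣ) (a : ℕ → R) (m : ℤ) : R :=
  if 0 ≤ m then
    PowerSeries.coeff m.toNat
      ((∏ i, geom ((x i : R)) * geom (((x i)⁻¹ : Rˣ) : R)) *
        ∏ j ∈ Finset.range (n + m.toNat - 1), lin (a (j + 1)))
  else 0

noncomputable def hoo {R : Type*} [CommRing R] {n : ℕ} (x : Fin n → Rˣ) (a : ℕ → R) (m : ℤ) : R :=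
  if 0 ≤ m then
    PowerSeries.coeff m.toNat
      ((1 + PowerSeries.X) * (∏ i, geom ((x i : R)) * geom (((x i)⁻¹ : Rˣ) : R)) *
        ∏ j ∈ Finset.range (n + m.toNat - 1), lin (a (j + 1)))
  else 0

noncomputable def heo {R : Type*} [CommRing R] {n : ℕ} (x : Fin n → Rˣ) (a : ℕ → R) (m : ℤ) : R :=
  if 0 ≤ m then
    if h : n = 1 then
      (PowerSeries.coeff m.toNat
        ((geom ((x ⟨0, by omega⟩ : Rˣ) : R) + geom (((x ⟨0, by omega⟩)⁻¹ : Rˣ) : R)) *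
          ∏ j ∈ Finset.range m.toNat, lin (a (j + 1))))
        - (if m = 0 then 1 else 0)
    else
      PowerSeries.coeff m.toNat
        ((1 - PowerSeries.X ^ 2) * (∏ i, geom ((x i : R)) * geom (((x i)⁻¹ : Rˣ) : R)) *
          ∏ j ∈ Finset.range (n + m.toNat - 1), lin (a (j + 1)))
  else 0

noncomputable def heod {R : Type*} [CommRing R] {n : ℕ} (x : Fin n → Rˣ) (a : ℕ → R) (m : ℤ) : R :=
  if 0 < m then
    if h : 0 < n then
      PowerSeries.coeff m.toNat
        ((geom ((x ⟨0, h⟩ : Rˣ) : R) - geom (((x ⟨0, h⟩)⁻¹ : Rˣ) : R)) *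
          (∏ i ∈ Finset.univ.filter (fun i : Fin n => i ≠ ⟨0, h⟩),
            geom ((x i : R)) * geom (((x i)⁻¹ : Rˣ) : R)) *
          ∏ j ∈ Finset.range (n + m.toNat - 1), lin (a (j + 1)))
    else 0
  else 0


/-!
Write `w_i = x_i + x̄_i` and `G_i = 1 / ((1 - x_i t)(1 - x̄_i t)) = 1 / (1 - w_i t + t²)`. The
`(i, j)` entry of the left-hand matrix is `(x_i - x̄_i) [t^p] G_i(t) ∏_{s ≤ p} (1 + a_s t)` with
`p = λ_j + n - 1 - j`. Since `1 / G` is linear in `w`, we have the partial fraction identity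
`G_i - G_l = (w_i - w_l) t G_i G_l`, and iterating it over `l = n, n - 1, …, i + 1` gives
`G_i = ∑_{k ≥ i} ∏_{l > k} (w_i - w_l) · t^{n-k} G_k ⋯ G_n`. The coefficient of `t^p` in
`t^{n-k} G_k ⋯ G_n ∏ (1 + a_s t)` is exactly `h^{sp}_{λ_j - j + k}(x^{(k)}, x̄^{(k)} | a)`, so the
left-hand matrix is a diagonal matrix times an upper triangular matrix with diagonal
`∏_{l > i} (w_i - w_l)` times the flagged matrix of the right-hand side.
-/

theorem eq_sum_of_sub_eq_mul {ι S : Type*} [LinearOrder ι] [CommRing S] (g w : ι → S) (t : S)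
    (hg : ∀ i j, g i - g j = (w i - w j) * t * g i * g j) (s : Finset ι) {i : ι} (hi : i ∈ s) :
    g i = ∑ k ∈ s with i ≤ k,
      (∏ l ∈ s with k < l, (w i - w l)) * t ^ #{l ∈ s | k < l} * ∏ l ∈ s with k ≤ l, g l := by
  induction s using Finset.induction_on_max generalizing i with
  | empty => simp at hi
  | insert M s hM ih =>
    have hMs : M ∉ s := fun h => lt_irrefl M (hM M h)
    have hle : ({l ∈ insert M s | M ≤ l} : Finset ι) = {M} := by
      rw [filter_insert, if_pos le_rfl, filter_eq_empty_iff.2 fun l hl => not_le.2 (hM l hl)]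
      rfl
    have hlt : ({l ∈ insert M s | M < l} : Finset ι) = ∅ :=
      filter_eq_empty_iff.2 fun l hl h => by
        rcases mem_insert.1 hl with rfl | hl
        exacts [lt_irrefl l h, lt_asymm (hM l hl) h]
    have hlast : ∀ i, (∏ l ∈ insert M s with M < l, (w i - w l)) * t ^ #{l ∈ insert M s | M < l}
        * ∏ l ∈ insert M s with M ≤ l, g l = g M := fun i => by
      rw [hlt, hle, prod_empty, card_empty, pow_zero, prod_singleton, one_mul, one_mul]
    rcases eq_or_ne i M with rfl | hiM
    · rw [hle, sum_singleton, hlast]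
    · have his : i ∈ s := (mem_insert.1 hi).resolve_left hiM
      have hterm : ∀ k ∈ ({k ∈ s | i ≤ k} : Finset ι),
          (∏ l ∈ insert M s with k < l, (w i - w l)) * t ^ #{l ∈ insert M s | k < l} *
            ∏ l ∈ insert M s with k ≤ l, g l
          = (w i - w M) * t * g M * ((∏ l ∈ s with k < l, (w i - w l)) * t ^ #{l ∈ s | k < l} *
            ∏ l ∈ s with k ≤ l, g l) := by
        intro k hk
        have hkM : k < M := hM k (mem_filter.1 hk).1
        rw [filter_insert, if_pos hkM, filter_insert, if_pos hkM.le,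
          prod_insert (by simp [hMs]), prod_insert (by simp [hMs]),
          card_insert_of_notMem (by simp [hMs]), pow_succ]
        ring
      rw [filter_insert, if_pos (hM i his).le, sum_insert (by simp [hMs]), sum_congr rfl hterm,
        ← mul_sum, ← ih his, hlast]
      linear_combination hg i M

theorem Fin.prod_Ici_eq_prod_univ {M : Type*} [CommMonoid M] {n : ℕ} (f : Fin n → M)
    (k : Fin n) : ∏ l ∈ Ici k, f l = ∏ i : Fin (n - k), f ⟨k + i, by omega⟩ := by
  refine (prod_bij (fun i _ => ⟨k + i, by omega⟩) (fun i _ => ?_) (fun i _ j _ h => ?_)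
    (fun l hl => ?_) (fun _ _ => rfl)).symm
  · simp [Fin.le_def]
  · simpa [Fin.ext_iff] using h
  · refine ⟨⟨l - k, by omega⟩, mem_univ _, ?_⟩
    have := Fin.le_def.1 (mem_Ici.1 hl)
    exact Fin.ext (Nat.add_sub_cancel' this)

section PowerSeries

open PowerSeries

variable {R : Type*} [CommRing R]

theorem geom_mul_one_sub (x : R) : geom x * (1 - C x * X) = 1 := by
  ext (_ | k)
  · simp [geom, coeff_zero_eq_constantCoeff]
  · rw [mul_sub, mul_one, map_sub, ← mul_assoc, mul_comm _ X, coeff_succ_X_mul,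
      mul_comm, coeff_C_mul]
    simp [geom, pow_succ, mul_comm]

theorem coeff_geom_mul_prod_lin (x : R) (a : ℕ → R) (p e : ℕ) :
    coeff (p + e) (geom x * ∏ s ∈ range p, lin (a (s + 1))) = x ^ e * facpow x a p := by
  induction p generalizing e with
  | zero => simp [geom, facpow]
  | succ p ih =>
    have hsplit : geom x * ∏ s ∈ range (p + 1), lin (a (s + 1))
        = geom x * ∏ s ∈ range p, lin (a (s + 1))
          + C (a (p + 1)) * (X * (geom x * ∏ s ∈ range p, lin (a (s + 1)))) := by
      rw [prod_range_succ, lin]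
      ring
    rw [hsplit, map_add, show p + 1 + e = p + (e + 1) by ring, coeff_C_mul, ← add_assoc,
      coeff_succ_X_mul, ih, add_assoc, ih, facpow, facpow, prod_range_succ]
    ring

theorem facpow_eq_coeff (x : R) (a : ℕ → R) (p : ℕ) :
    facpow x a p = coeff p (geom x * ∏ s ∈ range p, lin (a (s + 1))) := by
  simpa using (coeff_geom_mul_prod_lin x a p 0).symm

theorem C_mul_geom_sub_C_mul_geom (x y : R) :
    C x * geom x - C y * geom y = C (x - y) * (geom x * geom y) := by
  rw [map_sub]
  linear_combination (C y * geom y) * geom_mul_one_sub x - (C x * geom x) * geom_mul_one_sub y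

theorem mul_facpow_sub_mul_facpow (x y : R) (a : ℕ → R) (p : ℕ) :
    x * facpow x a p - y * facpow y a p
      = (x - y) * coeff p (geom x * geom y * ∏ s ∈ range p, lin (a (s + 1))) := by
  rw [facpow_eq_coeff, facpow_eq_coeff, ← coeff_C_mul, ← coeff_C_mul, ← map_sub,
    ← coeff_C_mul, ← mul_assoc, ← mul_assoc, ← mul_sub_right_distrib,
    C_mul_geom_sub_C_mul_geom, mul_assoc]

noncomputable def geomSp (u : Rˣ) : R⟦X⟧ :=
  geom (u : R) * geom ((u⁻¹ : Rˣ) : R)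

theorem one_sub_C_mul_X_add_X_sq_mul_geomSp (u : Rˣ) :
    (1 - C ((u : R) + ↑u⁻¹) * X + X ^ 2) * geomSp u = 1 := by
  have hC : C (u : R) * C ((u⁻¹ : Rˣ) : R) = 1 := by rw [← map_mul, Units.mul_inv, map_one]
  calc (1 - C ((u : R) + ↑u⁻¹) * X + X ^ 2) * geomSp u
      = (geom (u : R) * (1 - C (u : R) * X)) * (geom ((u⁻¹ : Rˣ) : R) * (1 - C ↑u⁻¹ * X)) := by
        rw [geomSp, map_add]
        linear_combination (-X ^ 2 * geom (u : R) * geom ((u⁻¹ : Rˣ) : R)) * hC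
    _ = 1 := by rw [geom_mul_one_sub, geom_mul_one_sub, one_mul]

theorem geomSp_sub_geomSp (u v : Rˣ) :
    geomSp u - geomSp v
      = (C ((u : R) + ↑u⁻¹) - C ((v : R) + ↑v⁻¹)) * X * geomSp u * geomSp v := by
  linear_combination geomSp v * one_sub_C_mul_X_add_X_sq_mul_geomSp u
    - geomSp u * one_sub_C_mul_X_add_X_sq_mul_geomSp v

theorem geomSp_eq_sum_Ici {n : ℕ} (x : Fin n → Rˣ) (i : Fin n) :
    geomSp (x i) = ∑ k ∈ Ici i,
      C (∏ l ∈ Ioi k, ((x i : R) + ↑(x i)⁻¹ - ↑(x l) - ↑(x l)⁻¹)) * X ^ #(Ioi k)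
        * ∏ l ∈ Ici k, geomSp (x l) := by
  have := eq_sum_of_sub_eq_mul (fun i => geomSp (x i)) (fun i => C ((x i : R) + ((x i)⁻¹ : Rˣ)))
    (X : R⟦X⟧) (fun i j => geomSp_sub_geomSp (x i) (x j)) univ (mem_univ i)
  simpa only [filter_le_eq_Ici, filter_lt_eq_Ioi, map_prod, map_sub, map_add, sub_sub] using this

theorem coeff_X_pow_mul_eq_hsp {N : ℕ} (y : Fin N → Rˣ) (a : ℕ → R) {e : ℕ} (he : e + 1 = N)
    (q : ℕ) :
    coeff q (X ^ e * ((∏ i, geomSp (y i)) * ∏ s ∈ range q, lin (a (s + 1))))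
      = hsp y a ((q : ℤ) - e) := by
  rw [coeff_X_pow_mul', hsp]
  split_ifs with hq hm hm
  · rw [show ((q : ℤ) - e).toNat = q - e by omega, show N + (q - e) - 1 = q by omega]
    rfl
  · omega
  · omega
  · rfl

theorem coeff_X_pow_mul_prod_Ici_geomSp {n : ℕ} (x : Fin n → Rˣ) (a : ℕ → R) (k : Fin n)
    (q : ℕ) :
    coeff q (X ^ #(Ioi k) * ((∏ l ∈ Ici k, geomSp (x l)) * ∏ s ∈ range q, lin (a (s + 1))))
      = hsp (fun k' : Fin (n - k) => x ⟨k + k', by omega⟩) a ((q : ℤ) - #(Ioi k)) := by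
  rw [Fin.prod_Ici_eq_prod_univ]
  exact coeff_X_pow_mul_eq_hsp _ a (by rw [Fin.card_Ioi]; omega) q

end PowerSeries

section Matrix

variable {R : Type*} [CommRing R] {n : ℕ}

def spTransitionMatrix (x : Fin n → Rˣ) : Matrix (Fin n) (Fin n) R :=
  Matrix.of fun i k =>
    if i ≤ k then ∏ l ∈ Ioi k, ((x i : R) + ↑(x i)⁻¹ - ↑(x l) - ↑(x l)⁻¹) else 0

theorem det_spTransitionMatrix (x : Fin n → Rˣ) :
    (spTransitionMatrix x).det
      = ∏ i, ∏ l ∈ Ioi i, ((x i : R) + ↑(x i)⁻¹ - ↑(x l) - ↑(x l)⁻¹) := by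
  rw [Matrix.det_of_isUpperTriangular (M := spTransitionMatrix x)
    fun i k hki => if_neg (not_le.2 hki)]
  exact prod_congr rfl fun i _ => if_pos le_rfl

theorem facpow_matrix_eq_diagonal_mul (x : Fin n → Rˣ) (a : ℕ → R) (lam : Fin n → ℕ) :
    (Matrix.of fun i j : Fin n =>
        (x i : R) * facpow (x i : R) a (lam j + (n - 1 - j))
          - ((x i)⁻¹ : Rˣ) * facpow (((x i)⁻¹ : Rˣ) : R) a (lam j + (n - 1 - j)))
      = Matrix.diagonal (fun i => (x i : R) - ↑(x i)⁻¹) * spTransitionMatrix x *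
          Matrix.of fun k j : Fin n =>
            hsp (fun k' : Fin (n - k) => x ⟨k + k', by omega⟩) a ((lam j : ℤ) - j + k) := by
  ext i j
  rw [Matrix.of_apply, mul_facpow_sub_mul_facpow, Matrix.mul_apply]
  simp only [Matrix.diagonal_mul, spTransitionMatrix, Matrix.of_apply, mul_ite, ite_mul,
    mul_zero, zero_mul]
  rw [← sum_filter, filter_le_eq_Ici, ← geomSp, geomSp_eq_sum_Ici, sum_mul, map_sum, mul_sum]
  refine sum_congr rfl fun k _ => ?_
  rw [mul_assoc, mul_assoc, PowerSeries.coeff_C_mul, coeff_X_pow_mul_prod_Ici_geomSp,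
    Fin.card_Ioi, show ((lam j + (n - 1 - j) : ℕ) : ℤ) - (n - 1 - k : ℕ) = lam j - j + k by omega]
  ring

end Matrix

/-- flagged Jacobi-Trudi identity, symplectic case. -/
theorem flagged_jacobi_trudi_sp {R : Type*} [CommRing R] (n : ℕ)
    (x : Fin n → Rˣ) (a : ℕ → R) (lam : Fin n → ℕ) :
    Matrix.det (Matrix.of fun i j : Fin n =>
        (x i : R) * facpow ((x i : R)) a (lam j + (n - 1 - (j : ℕ)))
          - (((x i)⁻¹ : Rˣ) : R) * facpow ((((x i)⁻¹ : Rˣ) : R)) a (lam j + (n - 1 - (j : ℕ)))) =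
      (∏ i : Fin n, ((x i : R) - (((x i)⁻¹ : Rˣ) : R))) *
      (∏ i : Fin n, ∏ j ∈ Finset.Ioi i,
          ((x i : R) + (((x i)⁻¹ : Rˣ) : R) - (x j : R) - (((x j)⁻¹ : Rˣ) : R))) *
        Matrix.det (Matrix.of fun i j : Fin n =>
          hsp (fun k : Fin (n - (i : ℕ)) =>
              x ⟨(i : ℕ) + (k : ℕ), by have := i.isLt; have := k.isLt; omega⟩) a
            ((lam j : ℤ) - (j : ℕ) + (i : ℕ))) := by
  rw [facpow_matrix_eq_diagonal_mul, Matrix.det_mul, Matrix.det_mul, Matrix.det_diagonal,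
    det_spTransitionMatrix]
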